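/- Let L be a finite bounded lattice with 0 ≠ 1, n ≥ 2, and f : Lⁿ → L an n-ary aggregation function. Then for every x ∈ Lⁿ, f(x) = ⋀_{a ∈ Lⁿ_*} g_a(x), where Lⁿ_* = Lⁿ \ {(0,…,0), (1,…,1)} and the infimum is taken over all a ∈ Lⁿ_*. -/
import Mathlib


open Classical in
/-- The function `μ_a`: `μ_a(x) = 0` if `x ≤ a` and `x ≠ 1`, else `1`. -/
noncomputable def mu {L : Type*} [Lattice L] [BoundedOrder L] (a x : L) : L :=
  if x ≤ a ∧ x ≠ ⊤ then ⊥ else ⊤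

open Classical in
/-- The binary operation `⊕_b`: `1` if both arguments are `1`, `0` if both are `0`,
and `b` otherwise. -/
noncomputable def oplus {L : Type*} [Lattice L] [BoundedOrder L] (b x y : L) : L :=
  if x = ⊤ ∧ y = ⊤ then ⊤ else if x = ⊥ ∧ y = ⊥ then ⊥ else b

/-- The iterated value `x₁ ⊕_b ⋯ ⊕_b xₙ`. -/
noncomputable def iterOplus {L : Type*} [Lattice L] [BoundedOrder L] (b : L) :
    ∀ {n : ℕ}, (Fin (n + 1) → L) → L
  | 0, x => x 0
  | n + 1, x => oplus b (iterOplus b fun i : Fin (n + 1) => x i.castSucc) (x (Fin.last (n + 1)))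

/-- An `n`-ary aggregation function on a bounded lattice: monotone (componentwise
order on tuples) and preserving the bottom and top tuples. -/
def IsAgg {L : Type*} [Lattice L] [BoundedOrder L] {n : ℕ}
    (A : (Fin n → L) → L) : Prop :=
  Monotone A ∧ A ⊥ = ⊥ ∧ A ⊤ = ⊤

open Classical in
/-- The function `g_a(x) = (⋁_{i ∈ Ĵ_a} μ_{aᵢ}(xᵢ)) ∨ (x₁ ⊕_{f(a)} ⋯ ⊕_{f(a)} xₙ)`,
where `Ĵ_a = {i : aᵢ ≠ 1}`. -/
noncomputable def gAux {L : Type*} [Lattice L] [BoundedOrder L] {n : ℕ}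
    (f : (Fin (n + 1) → L) → L) (a x : Fin (n + 1) → L) : L :=
  ((Finset.univ.filter fun i => a i ≠ ⊤).sup fun i => mu (a i) (x i)) ⊔ iterOplus (f a) x

lemma iterOplus_top {L : Type*} [Lattice L] [BoundedOrder L] (b : L) :
    ∀ {n : ℕ} (x : Fin (n + 1) → L), (∀ i, x i = ⊤) → iterOplus b x = ⊤
  | 0, x, h => h 0
  | n + 1, x, h => by
      rw [iterOplus, iterOplus_top b _ (fun i => h i.castSucc), h (Fin.last (n+1)), oplus]
      simp

lemma iterOplus_bot {L : Type*} [Lattice L] [BoundedOrder L] (b : L) :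
    ∀ {n : ℕ} (x : Fin (n + 1) → L), (∀ i, x i = ⊥) → iterOplus b x = ⊥
  | 0, x, h => h 0
  | n + 1, x, h => by
      classical
      rw [iterOplus, iterOplus_bot b _ (fun i => h i.castSucc), h (Fin.last (n+1)), oplus]
      by_cases htb : (⊥ : L) = ⊤
      · simp [htb]
      · rw [if_neg (fun hc => htb hc.1), if_pos ⟨rfl, rfl⟩]

lemma oplus_self {L : Type*} [Lattice L] [BoundedOrder L] (b y : L) : oplus b b y = b := by
  classical
  rw [oplus]
  split_ifs with h1 h2
  · exact h1.1.symm
  · exact h2.1.symm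
  · rfl

lemma iterOplus_mixed {L : Type*} [Lattice L] [BoundedOrder L] (h01 : (⊥ : L) ≠ ⊤) (b : L) :
    ∀ {n : ℕ} (x : Fin (n + 2) → L), ¬ (∀ i, x i = ⊤) → ¬ (∀ i, x i = ⊥) →
      iterOplus b x = b
  | 0, x, h1, h2 => by
      classical
      have : iterOplus b x = oplus b (x 0) (x 1) := by
        rw [iterOplus]; rfl
      rw [this, oplus, if_neg, if_neg]
      · rintro ⟨ha, hb⟩
        exact h2 (by rw [Fin.forall_fin_two]; exact ⟨ha, hb⟩)
      · rintro ⟨ha, hb⟩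
        exact h1 (by rw [Fin.forall_fin_two]; exact ⟨ha, hb⟩)
  | n + 1, x, h1, h2 => by
      classical
      rw [iterOplus]
      set y : Fin (n + 2) → L := fun i => x i.castSucc with hy
      by_cases hyt : ∀ i, y i = ⊤
      · have hlast : x (Fin.last (n + 2)) ≠ ⊤ := by
          intro hl
          exact h1 (fun i => Fin.lastCases hl (fun j => hyt j) i)
        rw [iterOplus_top b y hyt, oplus, if_neg (fun hc => hlast hc.2),
          if_neg (fun hc => h01 hc.1.symm)]
      · by_cases hyb : ∀ i, y i = ⊥
        · have hlast : x (Fin.last (n + 2)) ≠ ⊥ := by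
            intro hl
            exact h2 (fun i => Fin.lastCases hl (fun j => hyb j) i)
          rw [iterOplus_bot b y hyb, oplus, if_neg (fun hc => h01 hc.1),
            if_neg (fun hc => hlast hc.2)]
        · rw [iterOplus_mixed h01 b y hyt hyb, oplus_self]


open Classical in
/-- Let `L` be a finite bounded lattice with `0 ≠ 1`, `n ≥ 2` and `f : Lⁿ → L` an
aggregation function.  Then `f(x) = ⋀_{a ∈ Lⁿ_*} g_a(x)` for every `x ∈ Lⁿ`, where
`Lⁿ_* = Lⁿ \ {(0,…,0), (1,…,1)}`.
(A tuple of length `n ≥ 2` is written as `x : Fin (n+1) → L` with `n ≥ 1`.) -/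
theorem agg_eq_inf_gAux {L : Type*} [Lattice L] [BoundedOrder L] [Fintype L]
    (h01 : (⊥ : L) ≠ ⊤) (n : ℕ) (hn : 1 ≤ n)
    (f : (Fin (n + 1) → L) → L) (hf : IsAgg f) (x : Fin (n + 1) → L) :
    f x = (Finset.univ.filter fun a : Fin (n + 1) → L => a ≠ ⊥ ∧ a ≠ ⊤).inf
      (fun a => gAux f a x) := by
  obtain ⟨m, rfl⟩ : ∃ m, n = m + 1 := ⟨n - 1, (Nat.succ_pred_eq_of_pos hn).symm⟩
  apply le_antisymm
  · apply Finset.le_inf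
    intro a ha
    simp only [Finset.mem_filter, Finset.mem_univ, true_and] at ha
    obtain ⟨ha1, ha2⟩ := ha
    by_cases hxt : ∀ i, x i = ⊤
    · rw [gAux, iterOplus_top (f a) x hxt]
      exact le_trans le_top le_sup_right
    by_cases hxb : ∀ i, x i = ⊥
    · rw [show x = (⊥ : Fin (m + 1 + 1) → L) from funext fun i => hxb i, hf.2.1]
      exact bot_le
    have hiter : iterOplus (f a) x = f a := iterOplus_mixed h01 (f a) x hxt hxb
    by_cases hsup : ∀ i, a i ≠ ⊤ → (x i ≤ a i ∧ x i ≠ ⊤)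
    · have hxa : x ≤ a := by
        intro i
        by_cases h : a i = ⊤
        · rw [h]; exact le_top
        · exact (hsup i h).1
      rw [gAux, hiter]
      exact le_trans (hf.1 hxa) le_sup_right
    · push_neg at hsup
      obtain ⟨i, hi, hmu⟩ := hsup
      have hmu' : ¬ (x i ≤ a i ∧ x i ≠ ⊤) := by
        rintro ⟨h1, h2⟩
        exact h2 (hmu h1)
      have hmuT : mu (a i) (x i) = ⊤ := by rw [mu, if_neg hmu']
      have : (⊤ : L) ≤ gAux f a x := by
        rw [gAux]
        refine le_trans ?_ le_sup_left
        calc (⊤ : L) = mu (a i) (x i) := hmuT.symm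
          _ ≤ _ := Finset.le_sup (f := fun i => mu (a i) (x i))
                (Finset.mem_filter.mpr ⟨Finset.mem_univ i, hi⟩)
      exact le_trans le_top (le_trans this (le_refl _))
  · by_cases hxt : ∀ i, x i = ⊤
    · rw [show x = (⊤ : Fin (m + 1 + 1) → L) from funext fun i => hxt i, hf.2.2]
      exact le_top
    by_cases hxb : ∀ i, x i = ⊥
    · -- pick a with a 0 = ⊥, a 1 = ⊤
      set a : Fin (m + 1 + 1) → L := fun i => if i = 0 then ⊥ else ⊤ with hadef
      have ha0 : a 0 = ⊥ := by simp [hadef]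
      have ha1 : a 1 = ⊤ := by simp [hadef]
      have ha : a ≠ ⊥ ∧ a ≠ ⊤ := by
        constructor
        · intro h
          have h' := congrFun h 1
          rw [ha1] at h'
          exact h01 (h'.symm.trans rfl)
        · intro h
          have h' := congrFun h 0
          rw [ha0] at h'
          exact h01 h'
      have hmem : a ∈ Finset.univ.filter fun a : Fin (m + 1 + 1) → L => a ≠ ⊥ ∧ a ≠ ⊤ := by
        simp [ha.1, ha.2]
      refine le_trans (Finset.inf_le hmem) ?_
      rw [gAux, iterOplus_bot (f a) x hxb]
      have hsup : ((Finset.univ.filter fun i => a i ≠ ⊤).sup fun i => mu (a i) (x i)) = ⊥ := by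
        apply le_antisymm _ bot_le
        apply Finset.sup_le
        intro i _
        rw [hxb i, mu, if_pos ⟨bot_le, h01⟩]
      rw [hsup, sup_bot_eq]
      rw [show x = (⊥ : Fin (m + 1 + 1) → L) from funext fun i => hxb i, hf.2.1]
    · -- x itself is in the index set
      have hx1 : x ≠ ⊥ := fun h => hxb fun i => congrFun h i
      have hx2 : x ≠ ⊤ := fun h => hxt fun i => congrFun h i
      have hmem : x ∈ Finset.univ.filter fun a : Fin (m + 1 + 1) → L => a ≠ ⊥ ∧ a ≠ ⊤ := by
        simp [hx1, hx2]
      refine le_trans (Finset.inf_le hmem) ?_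
      rw [gAux, iterOplus_mixed h01 (f x) x hxt hxb]
      apply sup_le _ (le_refl _)
      apply Finset.sup_le
      intro i hi
      simp only [Finset.mem_filter, Finset.mem_univ, true_and] at hi
      rw [mu, if_pos ⟨le_refl _, hi⟩]
      exact bot_le
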